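/- arXiv:2212.04353 — 2 statements merged into one kernel-verified Lean document; each statement's English description precedes it below -/
import Mathlib

section
/- Let $\pi : (K,\mu) \to (L,\nu)$ be a continuous measure-preserving map between compact metrizable probability spaces. If $\mu$ admits a disintegration $(\mu_l)_{l\in L}$ over $\nu$ such that $\mu_l$ is a Dirac measure for $\nu$-a.e. $l$, then $\pi$ is essentially invertible: there is a measurable map $s : L \to K$ with $\pi \circ s = \mathrm{id}_L$ $\nu$-a.e. and $s \circ \pi = \mathrm{id}_K$ $\mu$-a.e. -/
/-!
A countable separating family `S n` of Borel sets of `K` makes `ρ ↦ (ρ (S n))ₙ` injective on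
Dirac measures, and an injective measurable map out of a standard Borel space has a measurable
left inverse; so there is a measurable `r` with `r (δ x) = x`. The section is `s = r ∘ μl`: the
fiber condition puts the atom of `μl l` in `π⁻¹ {l}`, and disintegrating the set where
`s ∘ π ≠ id` shows that it is `μ`-null.
-/

open MeasureTheory Set Function
open scoped ENNReal

namespace MeasureTheory.Measure

theorem exists_measurable_leftInverse_dirac {K : Type*} [MeasurableSpace K]
    [StandardBorelSpace K] [Nonempty K] :
    ∃ r : Measure K → K, Measurable r ∧ ∀ x, r (dirac x) = x := by
  obtain ⟨S, hS_meas, hS_sep⟩ := exists_seq_separating K MeasurableSet.empty univ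
  let G : Measure K → ℕ → ℝ≥0∞ := fun ρ n => ρ (S n)
  have hG : Measurable G := measurable_pi_lambda _ fun n => measurable_coe (hS_meas n)
  have hG_inj : Injective (G ∘ dirac) := fun x y hxy =>
    hS_sep x trivial y trivial fun n => by
      have h := congrFun hxy n
      simp only [G, comp_apply, dirac_apply' _ (hS_meas n)] at h
      rw [← indicator_eq_one_iff_mem ℝ≥0∞, h, indicator_eq_one_iff_mem]
  obtain ⟨r, hr_meas, hr⟩ := ((hG.comp measurable_dirac).measurableEmbedding
    hG_inj).exists_measurable_extend measurable_id fun _ => ‹Nonempty K›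
  exact ⟨r ∘ G, hr_meas.comp hG, congrFun hr⟩

end MeasureTheory.Measure

theorem essentially_invertible_of_dirac_disintegration_general
    {K L : Type*}
    [TopologicalSpace K] [CompactSpace K] [TopologicalSpace.MetrizableSpace K]
    [MeasurableSpace K] [BorelSpace K]
    [TopologicalSpace L]
    [MeasurableSpace L] [BorelSpace L]
    (μ : Measure K) [IsProbabilityMeasure μ] (ν : Measure L)
    (π : K → L) (hπcont : Continuous π)
    (μl : L → Measure K)
    (hmeas : ∀ s : Set K, MeasurableSet s → Measurable fun l => μl l s)
    (hdis : ∀ s : Set K, MeasurableSet s → μ s = ∫⁻ l, μl l s ∂ν)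
    (hfib : ∀ᵐ l ∂ν, μl l ((π ⁻¹' {l})ᶜ) = 0)
    (hdirac : ∀ᵐ l ∂ν, ∃ x : K, μl l = Measure.dirac x) :
    ∃ s : L → K, Measurable s ∧ (∀ᵐ l ∂ν, π (s l) = l) ∧ (∀ᵐ x ∂μ, s (π x) = x) := by
  have : StandardBorelSpace K := by
    let := TopologicalSpace.metrizableSpaceMetric K
    infer_instance
  have := nonempty_of_isProbabilityMeasure μ
  obtain ⟨r, hr_meas, hr_dirac⟩ := Measure.exists_measurable_leftInverse_dirac (K := K)
  set s := r ∘ μl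
  have hs_meas : Measurable s := hr_meas.comp (Measure.measurable_of_measurable_coe μl hmeas)
  have hμl : ∀ᵐ l ∂ν, μl l = Measure.dirac (s l) := by
    filter_upwards [hdirac] with l ⟨x, hx⟩
    simp only [hx, s, comp_apply, hr_dirac]
  have hsection : ∀ᵐ l ∂ν, π (s l) = l := by
    filter_upwards [hμl, hfib] with l hl hfl
    simpa [hl] using hfl
  refine ⟨s, hs_meas, hsection, ?_⟩
  have hA : MeasurableSet {x | s (π x) = x} :=
    measurableSet_eq_fun (hs_meas.comp hπcont.measurable) measurable_id
  rw [ae_iff, ← compl_ofPred, hdis _ hA.compl, lintegral_eq_zero_iff (hmeas _ hA.compl)]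
  filter_upwards [hμl, hsection] with l hl hsl
  simp [hl, hsl]

/-- If `π : (K, μ) → (L, ν)` is a continuous measure-preserving map between compact
metrizable probability spaces and `μ` admits a disintegration `(μ_l)` over `ν` whose fiber
measures are `ν`-a.e. Dirac measures, then `π` is essentially invertible: there is a
measurable `s : L → K` with `π ∘ s = id` `ν`-a.e. and `s ∘ π = id` `μ`-a.e. -/
theorem essentially_invertible_of_dirac_disintegration
    {K L : Type*}
    [TopologicalSpace K] [CompactSpace K] [TopologicalSpace.MetrizableSpace K]
    [MeasurableSpace K] [BorelSpace K]
    [TopologicalSpace L] [CompactSpace L] [TopologicalSpace.MetrizableSpace L]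
    [MeasurableSpace L] [BorelSpace L]
    (μ : Measure K) [IsProbabilityMeasure μ] (ν : Measure L) [IsProbabilityMeasure ν]
    (π : K → L) (hπcont : Continuous π) (hπ : Measure.map π μ = ν)
    (μl : L → Measure K) (hprob : ∀ l, IsProbabilityMeasure (μl l))
    (hmeas : ∀ s : Set K, MeasurableSet s → Measurable fun l => μl l s)
    (hdis : ∀ s : Set K, MeasurableSet s → μ s = ∫⁻ l, μl l s ∂ν)
    (hfib : ∀ᵐ l ∂ν, μl l ((π ⁻¹' {l})ᶜ) = 0)
    (hdirac : ∀ᵐ l ∂ν, ∃ x : K, μl l = Measure.dirac x) :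
    ∃ s : L → K, Measurable s ∧ (∀ᵐ l ∂ν, π (s l) = l) ∧ (∀ᵐ x ∂μ, s (π x) = x) :=
  essentially_invertible_of_dirac_disintegration_general μ ν π hπcont μl hmeas hdis hfib hdirac
end

section
/- Let $G$ be a locally compact second countable group acting measurably and nonsingularly on a standard probability space $(X,\mu)$. Then for every $f \in L^\infty(X,\mu)$, the map $g \mapsto f \circ g^{-1}$ (the induced Koopman action) is continuous from $G$ into $L^\infty(X,\mu)$ equipped with the $L^1$-norm. -/
/-!
For each `x`, the orbit map `h ↦ f (a h x)`, cut off to a compact set, lies in `L¹` of a Haar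
measure, where translation is continuous. Integrating over `x` (Fubini and dominated
convergence) gives `∫_L ‖f ∘ a (g h) - f ∘ a h‖_{L¹(μ)} dh → 0` as `g → 1` for a compact
neighbourhood `L` of `1`. Along a subsequence the integrand then tends to `0` at some `h₀`, i.e.
`f ∘ a g → f` in `L¹` of the equivalent measure `h₀_* μ`, and since `f` is bounded this transfers
back to `L¹(μ)`. A general base point `g₀` reduces to `g₀ = 1` by replacing `μ` with
`(g₀⁻¹)_* μ`.
-/

open MeasureTheory Filter Topology
open scoped ENNReal Pointwise

theorem tendsto_eLpNorm_comp_mul_left_sub {G E : Type*} [Group G] [TopologicalSpace G]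
    [IsTopologicalGroup G] [MeasurableSpace G] [BorelSpace G] [NormedAddCommGroup E]
    {ν : Measure G} [IsLocallyFiniteMeasure ν] [ν.InnerRegularCompactLTTop] [ν.IsMulLeftInvariant]
    {p : ℝ≥0∞} [Fact (1 ≤ p)] (hp : p ≠ ∞) {v : G → E} (hv : MemLp v p ν) :
    Tendsto (fun g => eLpNorm (fun h => v (g * h) - v h) p ν) (𝓝 1) (𝓝 0) := by
  have : Fact (p ≠ ∞) := ⟨hp⟩
  have hcont : Tendsto (fun g : G => DomMulAct.mk g • hv.toLp v) (𝓝 1) (𝓝 (hv.toLp v)) := by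
    simpa using ((DomMulAct.continuous_mk (M := G)).tendsto 1).smul_const (hv.toLp v)
  exact (Lp.tendsto_Lp_iff_tendsto_eLpNorm'' _
    (fun g => hv.comp_measurePreserving (measurePreserving_smul g ν)) v hv).1 hcont

theorem exists_strictMono_ae_tendsto_zero_of_tendsto_lintegral {α : Type*} [MeasurableSpace α]
    {μ : Measure α} {F : ℕ → α → ℝ≥0∞} (hF : ∀ n, AEMeasurable (F n) μ)
    (h : Tendsto (fun n => ∫⁻ x, F n x ∂μ) atTop (𝓝 0)) :
    ∃ φ : ℕ → ℕ, StrictMono φ ∧ ∀ᵐ x ∂μ, Tendsto (fun k => F (φ k) x) atTop (𝓝 0) := by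
  obtain ⟨φ, hφ, hsmall⟩ := extraction_forall_of_eventually fun k =>
    h.eventually_lt_const (ENNReal.pow_pos (ENNReal.inv_pos.2 ENNReal.ofNat_ne_top) k :
      (0 : ℝ≥0∞) < 2⁻¹ ^ k)
  refine ⟨φ, hφ, ?_⟩
  have hsum : ∫⁻ x, ∑' k, F (φ k) x ∂μ ≠ ∞ := by
    rw [lintegral_tsum fun k => hF (φ k)]
    refine ne_top_of_le_ne_top ?_ (ENNReal.tsum_le_tsum fun k => (hsmall k).le)
    simp [ENNReal.tsum_geometric, ENNReal.one_sub_inv_two]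
  filter_upwards [ae_lt_top' (AEMeasurable.tsum fun k => hF (φ k)) hsum] with x hx
  exact ENNReal.tendsto_atTop_zero_of_tsum_ne_top hx.ne

theorem tendsto_lintegral_of_absolutelyContinuous_of_ae_le {α : Type*} [MeasurableSpace α]
    {μ κ : Measure α} [IsFiniteMeasure μ] (hμκ : μ ≪ κ) {F : ℕ → α → ℝ≥0∞}
    (hF : ∀ n, Measurable (F n)) {M : ℝ≥0∞} (hM : M ≠ ∞) (hFM : ∀ n, ∀ᵐ x ∂μ, F n x ≤ M)
    (h : Tendsto (fun n => ∫⁻ x, F n x ∂κ) atTop (𝓝 0)) :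
    Tendsto (fun n => ∫⁻ x, F n x ∂μ) atTop (𝓝 0) := by
  refine tendsto_of_subseq_tendsto fun ns hns => ?_
  obtain ⟨φ, -, hφ⟩ := exists_strictMono_ae_tendsto_zero_of_tendsto_lintegral
    (fun n => (hF (ns n)).aemeasurable) (h.comp hns)
  refine ⟨φ, ?_⟩
  simpa using tendsto_lintegral_of_dominated_convergence (fun _ => M) (fun k => hF _)
    (fun k => hFM _) (by simpa using ENNReal.mul_ne_top hM (measure_ne_top μ Set.univ))
    (hμκ.ae_le hφ)

theorem map_action_quasiInvariant {G X : Type*} [Mul G] [MeasurableSpace X] {μ : Measure X}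
    {a : G → X → X} (ha : ∀ g, Measurable (a g)) (hmul : ∀ g h x, a (g * h) x = a g (a h x))
    (hqi : ∀ g, μ.map (a g) ≪ μ ∧ μ ≪ μ.map (a g)) (g₀ g : G) :
    (μ.map (a g₀)).map (a g) ≪ μ.map (a g₀) ∧ μ.map (a g₀) ≪ (μ.map (a g₀)).map (a g) := by
  have hcomp : (μ.map (a g₀)).map (a g) = μ.map (a (g * g₀)) := by
    rw [Measure.map_map (ha g) (ha g₀), funext (hmul g g₀)]
    rfl
  rw [hcomp]
  exact ⟨(hqi _).1.trans (hqi g₀).2, (hqi g₀).1.trans (hqi _).2⟩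

section

variable {G X E : Type*} [Group G] [TopologicalSpace G] [IsTopologicalGroup G]
  [LocallyCompactSpace G] [SecondCountableTopology G] [MeasurableSpace G] [BorelSpace G]
  [MeasurableSpace X] [NormedAddCommGroup E] {ν : Measure G} [ν.IsHaarMeasure] {μ : Measure X}

theorem tendsto_lintegral_lintegral_enorm_comp_mul_left_sub {v : X → G → E}
    (hv : StronglyMeasurable (Function.uncurry v))
    (hfin : ∫⁻ x, ∫⁻ h, ‖v x h‖ₑ ∂ν ∂μ ≠ ∞) :
    Tendsto (fun g => ∫⁻ x, ∫⁻ h, ‖v x (g * h) - v x h‖ₑ ∂ν ∂μ) (𝓝 1) (𝓝 0) := by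
  have hnorm : Measurable fun x => ∫⁻ h, ‖v x h‖ₑ ∂ν := hv.enorm.lintegral_prod_right'
  have hvx : ∀ x, StronglyMeasurable (v x) := fun x => hv.comp_measurable measurable_prodMk_left
  have hmem : ∀ᵐ x ∂μ, MemLp (v x) 1 ν := by
    filter_upwards [ae_lt_top hnorm hfin] with x hx
    exact ⟨(hvx x).aestronglyMeasurable, by rwa [eLpNorm_one_eq_lintegral_enorm]⟩
  have hle : ∀ g x, ∫⁻ h, ‖v x (g * h) - v x h‖ₑ ∂ν ≤ 2 * ∫⁻ h, ‖v x h‖ₑ ∂ν := fun g x =>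
    calc ∫⁻ h, ‖v x (g * h) - v x h‖ₑ ∂ν ≤ ∫⁻ h, (‖v x (g * h)‖ₑ + ‖v x h‖ₑ) ∂ν :=
          lintegral_mono fun h => enorm_sub_le
      _ = 2 * ∫⁻ h, ‖v x h‖ₑ ∂ν := by
          rw [lintegral_add_right _ (hvx x).enorm,
            lintegral_mul_left_eq_self (fun h => ‖v x h‖ₑ) g, two_mul]
  simpa using tendsto_lintegral_filter_of_dominated_convergence (f := fun _ => 0)
    (fun x => 2 * ∫⁻ h, ‖v x h‖ₑ ∂ν)
    (Eventually.of_forall fun g => ((hv.comp_measurable (measurable_fst.prodMk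
      (measurable_snd.const_mul g))).sub hv).enorm.lintegral_prod_right')
    (Eventually.of_forall fun g => Eventually.of_forall (hle g))
    (by rw [lintegral_const_mul _ hnorm]; exact ENNReal.mul_ne_top ENNReal.ofNat_ne_top hfin)
    (hmem.mono fun x hx => by
      simpa [eLpNorm_one_eq_lintegral_enorm] using
        tendsto_eLpNorm_comp_mul_left_sub ENNReal.one_ne_top hx)

variable [IsFiniteMeasure μ] {a : G → X → X} (hmeas : Measurable fun p : G × X => a p.1 p.2)
include hmeas

theorem tendsto_setLIntegral_lintegral_enorm_comp_action_sub {f : X → E}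
    (hf : StronglyMeasurable f) {C : ℝ≥0∞} (hC : C ≠ ∞) (hbd : ∀ g, ∀ᵐ x ∂μ, ‖f (a g x)‖ₑ ≤ C)
    {L : Set G} (hL : IsCompact L) :
    Tendsto (fun g => ∫⁻ h in L, ∫⁻ x, ‖f (a (g * h) x) - f (a h x)‖ₑ ∂μ ∂ν) (𝓝 1) (𝓝 0) := by
  obtain ⟨L₀, hL₀, hL₀1⟩ := exists_compact_mem_nhds (1 : G)
  set K := closure (L₀ * L)
  have hK : IsCompact K := (hL₀.mul hL).closure
  -- The cut-off to `K` makes the orbit maps integrable and is invisible for `g ∈ L₀`, `h ∈ L`.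
  set v : X → G → E := fun x => K.indicator fun h => f (a h x)
  have hv : StronglyMeasurable (Function.uncurry v) :=
    (hf.comp_measurable (hmeas.comp measurable_swap)).indicator
      (measurable_snd isClosed_closure.measurableSet)
  have hfin : ∫⁻ x, ∫⁻ h, ‖v x h‖ₑ ∂ν ∂μ ≠ ∞ := by
    rw [lintegral_lintegral_swap hv.enorm.aemeasurable]
    refine ne_top_of_le_ne_top (b := ∫⁻ h, K.indicator (fun _ => C * μ Set.univ) h ∂ν) ?_ ?_
    · rw [lintegral_indicator_const isClosed_closure.measurableSet]
      exact ENNReal.mul_ne_top (ENNReal.mul_ne_top hC (measure_ne_top _ _)) hK.measure_lt_top.ne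
    · refine lintegral_mono fun h => ?_
      by_cases hh : h ∈ K
      · simp only [v, Set.indicator_of_mem hh]
        rw [← lintegral_const]
        exact lintegral_mono_ae (hbd h)
      · simp [v, hh]
  refine tendsto_of_tendsto_of_tendsto_of_le_of_le' tendsto_const_nhds
    (tendsto_lintegral_lintegral_enorm_comp_mul_left_sub hv hfin)
    (Eventually.of_forall fun _ => zero_le) ?_
  filter_upwards [hL₀1] with g hg
  have hmeas_sub : Measurable fun p : X × G => ‖v p.1 (g * p.2) - v p.1 p.2‖ₑ :=
    ((hv.comp_measurable (measurable_fst.prodMk (measurable_snd.const_mul g))).sub hv).enorm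
  calc ∫⁻ h in L, ∫⁻ x, ‖f (a (g * h) x) - f (a h x)‖ₑ ∂μ ∂ν
      ≤ ∫⁻ h in L, ∫⁻ x, ‖v x (g * h) - v x h‖ₑ ∂μ ∂ν := by
        refine setLIntegral_mono hmeas_sub.lintegral_prod_left' fun h hh => le_of_eq ?_
        have hgh : g * h ∈ K := subset_closure (Set.mul_mem_mul hg hh)
        have hhK : h ∈ K := subset_closure ⟨1, mem_of_mem_nhds hL₀1, h, hh, one_mul h⟩
        simp [v, hgh, hhK]
    _ ≤ ∫⁻ h, ∫⁻ x, ‖v x (g * h) - v x h‖ₑ ∂μ ∂ν := setLIntegral_le_lintegral _ _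
    _ = ∫⁻ x, ∫⁻ h, ‖v x (g * h) - v x h‖ₑ ∂ν ∂μ :=
        (lintegral_lintegral_swap hmeas_sub.aemeasurable).symm

theorem tendsto_lintegral_enorm_comp_action_sub (hmul : ∀ g h x, a (g * h) x = a g (a h x))
    (hqi : ∀ g, μ.map (a g) ≪ μ ∧ μ ≪ μ.map (a g)) {f : X → E} (hf : StronglyMeasurable f)
    {C : ℝ≥0∞} (hC : C ≠ ∞) (hbd : ∀ᵐ x ∂μ, ‖f x‖ₑ ≤ C) :
    Tendsto (fun g => ∫⁻ x, ‖f (a g x) - f x‖ₑ ∂μ) (𝓝 1) (𝓝 0) := by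
  have ha : ∀ g, Measurable (a g) := fun g => hmeas.comp measurable_prodMk_left
  have hbd' : ∀ g, ∀ᵐ x ∂μ, ‖f (a g x)‖ₑ ≤ C := fun g =>
    (Measure.QuasiMeasurePreserving.mk (ha g) (hqi g).1).ae hbd
  have hmeas_diff : ∀ g, Measurable fun x => ‖f (a g x) - f x‖ₑ := fun g =>
    ((hf.comp_measurable (ha g)).sub hf).enorm
  have hmeas_avg : ∀ g, Measurable fun h => ∫⁻ x, ‖f (a (g * h) x) - f (a h x)‖ₑ ∂μ := fun g =>
    Measurable.lintegral_prod_left' (f := fun p : X × G => ‖f (a (g * p.2) p.1) - f (a p.2 p.1)‖ₑ)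
      ((hf.comp_measurable (hmeas.comp ((measurable_snd.const_mul g).prodMk measurable_fst))).sub
        (hf.comp_measurable (hmeas.comp measurable_swap))).enorm
  obtain ⟨L, hL, hL1⟩ := exists_compact_mem_nhds (1 : G)
  have havg := tendsto_setLIntegral_lintegral_enorm_comp_action_sub (ν := Measure.haar) hmeas hf hC
    hbd' hL
  have : (ae (Measure.haar.restrict L)).NeBot :=
    ae_neBot.2 (by simpa using (Measure.measure_pos_of_mem_nhds Measure.haar hL1).ne')
  rw [tendsto_iff_seq_tendsto]
  intro w hw
  refine tendsto_of_subseq_tendsto fun ns hns => ?_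
  obtain ⟨φ, -, hφ⟩ := exists_strictMono_ae_tendsto_zero_of_tendsto_lintegral
    (fun n => (hmeas_avg _).aemeasurable) (havg.comp (hw.comp hns))
  obtain ⟨h₀, hh₀⟩ := hφ.exists
  refine ⟨φ, tendsto_lintegral_of_absolutelyContinuous_of_ae_le (hqi h₀).2 (fun k => hmeas_diff _)
    (ENNReal.add_ne_top.2 ⟨hC, hC⟩) (fun k => ?_) (hh₀.congr fun k => ?_)⟩
  · filter_upwards [hbd' (w (ns (φ k))), hbd] with x h₁ h₂
    exact enorm_sub_le.trans (add_le_add h₁ h₂)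
  · rw [lintegral_map (hmeas_diff _) (ha h₀)]
    simp only [Function.comp_apply, hmul]
end

theorem koopman_action_L1_strongly_continuous_general
    {G : Type*} [Group G] [TopologicalSpace G] [IsTopologicalGroup G]
    [LocallyCompactSpace G] [SecondCountableTopology G]
    [MeasurableSpace G] [BorelSpace G]
    {X : Type*} [MeasurableSpace X]
    (μ : Measure X) [IsProbabilityMeasure μ]
    (a : G → X → X)
    (hmeas : Measurable fun p : G × X => a p.1 p.2)
    (hmul : ∀ g h x, a (g * h) x = a g (a h x))
    (hns : ∀ g, Measure.map (a g) μ ≪ μ ∧ μ ≪ Measure.map (a g) μ)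
    (f : X → ℂ) (hfmeas : Measurable f) (C : ℝ) (hfbd : ∀ᵐ x ∂μ, ‖f x‖ ≤ C) (g₀ : G) :
    Tendsto (fun g : G => eLpNorm (fun x => f (a g⁻¹ x) - f (a g₀⁻¹ x)) 1 μ)
      (𝓝 g₀) (𝓝 0) := by
  have ha : ∀ g, Measurable (a g) := fun g => hmeas.comp measurable_prodMk_left
  have hbd : ∀ᵐ x ∂μ.map (a g₀⁻¹), ‖f x‖ₑ ≤ ENNReal.ofReal C :=
    (hns g₀⁻¹).1.ae_le (hfbd.mono fun x hx => ofReal_norm (f x) ▸ ENNReal.ofReal_le_ofReal hx)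
  have hlim : Tendsto (fun g : G => g⁻¹ * g₀) (𝓝 g₀) (𝓝 1) := by
    simpa using (continuous_inv.tendsto g₀).mul_const g₀
  refine ((tendsto_lintegral_enorm_comp_action_sub hmeas hmul
    (map_action_quasiInvariant ha hmul hns g₀⁻¹) hfmeas.stronglyMeasurable ENNReal.ofReal_ne_top
    hbd).comp hlim).congr fun g => ?_
  rw [Function.comp_apply, lintegral_map (by fun_prop) (ha _), eLpNorm_one_eq_lintegral_enorm]
  simp [← hmul]

/-- For a measurable nonsingular action of a locally compact second countable group `G` on a
standard probability space `(X, μ)`, the induced Koopman action on `L^∞(X, μ)` is strongly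
continuous with respect to the `L¹`-norm: for each essentially bounded measurable `f`, the
map `g ↦ f ∘ g⁻¹` is continuous from `G` into `L¹(X, μ)`. -/
theorem koopman_action_L1_strongly_continuous
    {G : Type*} [Group G] [TopologicalSpace G] [IsTopologicalGroup G]
    [LocallyCompactSpace G] [SecondCountableTopology G]
    [MeasurableSpace G] [BorelSpace G]
    {X : Type*} [MeasurableSpace X] [StandardBorelSpace X]
    (μ : Measure X) [IsProbabilityMeasure μ]
    (a : G → X → X)
    (hmeas : Measurable fun p : G × X => a p.1 p.2)
    (hone : ∀ x, a 1 x = x) (hmul : ∀ g h x, a (g * h) x = a g (a h x))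
    (hns : ∀ g, Measure.map (a g) μ ≪ μ ∧ μ ≪ Measure.map (a g) μ)
    (f : X → ℂ) (hfmeas : Measurable f) (C : ℝ) (hfbd : ∀ᵐ x ∂μ, ‖f x‖ ≤ C) (g₀ : G) :
    Tendsto (fun g : G => eLpNorm (fun x => f (a g⁻¹ x) - f (a g₀⁻¹ x)) 1 μ)
      (𝓝 g₀) (𝓝 0) :=
  koopman_action_L1_strongly_continuous_general μ a hmeas hmul hns f hfmeas C hfbd g₀
end
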